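/- Let Q be a quantum matrix of size m and let S ⊆ Fin m be a nonempty subset. Then the coordinate subspace L_S is contained in the point cone V_Q if and only if the principal submatrix Q(S) has rank 1. -/

import Mathlib

/-- A quantum matrix of size `m`: all entries nonzero, diagonal entries `1`,
and `Q i j * Q j i = 1` for all `i, j`. -/
def IsQuantumMatrix {m : ℕ} (Q : Matrix (Fin m) (Fin m) ℂ) : Prop :=
  (∀ i j, Q i j ≠ 0) ∧ (∀ i, Q i i = 1) ∧ (∀ i j, Q i j * Q j i = 1)

/-- The point cone of a quantum matrix `Q`. -/
def pointCone {m : ℕ} (Q : Matrix (Fin m) (Fin m) ℂ) : Set (Fin m → ℂ) :=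
  {u | u ≠ 0 ∧ ∀ i j k : Fin m, i < j → j < k →
    (Q i j * Q j k - Q i k) * u i * u j * u k = 0}

/-- The (punctured) coordinate subspace of `ℂ^m` supported on `S`. -/
def coordSubspace {m : ℕ} (S : Set (Fin m)) : Set (Fin m → ℂ) :=
  {u | u ≠ 0 ∧ ∀ i, i ∉ S → u i = 0}

/-- The principal submatrix of `Q` with rows and columns indexed by `S`. -/
def principalSubmatrix {m : ℕ} (Q : Matrix (Fin m) (Fin m) ℂ) (S : Finset (Fin m)) :
    Matrix {x : Fin m // x ∈ S} {x : Fin m // x ∈ S} ℂ :=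
  Q.submatrix (fun i => i.1) (fun j => j.1)

/-!
Evaluating the point-cone equations at the indicator vector of `S` shows that `L_S ⊆ V_Q`
exactly when `Q i j * Q j k = Q i k` for all `i < j < k` in `S`. As `Q j i = (Q i j)⁻¹`, these
relations taken at the least element `a` of `S` give `Q i j = Q i a * Q a j` on `S`, so `Q(S)` is
the outer product of its column and row at `a` and has rank one. Conversely, for `Q(S)` of rank
one the `2 × 2` minor on rows `i, j` and columns `j, k` vanishes, and since `Q j j = 1` this is the
relation `Q i j * Q j k = Q i k`.
-/

namespace Matrix

variable {K m n : Type*} [Field K] [Fintype n]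

theorem col_mem_range_mulVecLin (A : Matrix m n K) (j : n) :
    A.col j ∈ LinearMap.range A.mulVecLin := by
  classical
  exact ⟨Pi.single j 1, by simp⟩

theorem one_le_rank_of_apply_ne_zero {A : Matrix m n K} {i : m} {j : n} (h : A i j ≠ 0) :
    1 ≤ A.rank := by
  rw [rank, Submodule.one_le_finrank_iff, Submodule.ne_bot_iff]
  exact ⟨A.col j, A.col_mem_range_mulVecLin j, fun h0 => h (congrFun h0 i)⟩

theorem rank_vecMulVec_eq_one {u : m → K} {v : n → K} {i : m} {j : n} (hu : u i ≠ 0)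
    (hv : v j ≠ 0) : (vecMulVec u v).rank = 1 :=
  (rank_vecMulVec_le u v).antisymm <|
    one_le_rank_of_apply_ne_zero (i := i) (j := j) (by simpa [vecMulVec_apply] using ⟨hu, hv⟩)

theorem mul_eq_mul_of_rank_le_one {A : Matrix m n K} (hA : A.rank ≤ 1) (i k : m) (j l : n) :
    A i j * A k l = A i l * A k j := by
  rw [rank, Submodule.finrank_le_one_iff_isPrincipal] at hA
  obtain ⟨v, hv⟩ := hA
  have hcol : ∀ j, ∃ c : K, ∀ r, A r j = c * v r := fun j => by
    obtain ⟨c, hc⟩ := Submodule.mem_span_singleton.mp (hv ▸ A.col_mem_range_mulVecLin j)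
    exact ⟨c, fun r => by simpa using (congrFun hc r).symm⟩
  obtain ⟨c, hc⟩ := hcol j
  obtain ⟨d, hd⟩ := hcol l
  rw [hc, hc, hd, hd]
  ring

end Matrix

theorem coordSubspace_subset_pointCone_iff {m : ℕ} (Q : Matrix (Fin m) (Fin m) ℂ)
    (S : Finset (Fin m)) :
    coordSubspace (S : Set (Fin m)) ⊆ pointCone Q ↔
      ∀ i ∈ S, ∀ j ∈ S, ∀ k ∈ S, i < j → j < k → Q i j * Q j k = Q i k := by
  classical
  constructor
  · intro h i hi j hj k hk hij hjk
    let u : Fin m → ℂ := fun x => if x ∈ S then 1 else 0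
    have hu : u ∈ coordSubspace (S : Set (Fin m)) :=
      ⟨fun h0 => by simpa [u, hi] using congrFun h0 i, fun x hx => if_neg hx⟩
    simpa [u, hi, hj, hk, sub_eq_zero] using (h hu).2 i j k hij hjk
  · rintro h u ⟨hu0, hsupp⟩
    refine ⟨hu0, fun i j k hij hjk => ?_⟩
    by_cases hS : i ∈ S ∧ j ∈ S ∧ k ∈ S
    · obtain ⟨hi, hj, hk⟩ := hS
      rw [h i hi j hj k hk hij hjk, sub_self]
      ring
    · obtain hi | hj | hk : i ∉ S ∨ j ∉ S ∨ k ∉ S := by tauto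
      all_goals simp [hsupp _ (Finset.mem_coe.not.mpr ‹_›)]

namespace IsQuantumMatrix

variable {m : ℕ} {Q : Matrix (Fin m) (Fin m) ℂ}

theorem apply_eq_inv (hQ : IsQuantumMatrix Q) (i j : Fin m) : Q i j = (Q j i)⁻¹ :=
  eq_inv_of_mul_eq_one_left (hQ.2.2 i j)

theorem eq_mul_of_mul_eq (hQ : IsQuantumMatrix Q) {a i j : Fin m}
    (h : Q a i * Q i j = Q a j) : Q i j = Q i a * Q a j := by
  rw [← h, ← mul_assoc, hQ.2.2 i a, one_mul]

theorem eq_mul_of_eq_mul_symm (hQ : IsQuantumMatrix Q) {a i j : Fin m}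
    (h : Q j i = Q j a * Q a i) : Q i j = Q i a * Q a j := by
  rw [hQ.apply_eq_inv i j, h, mul_inv, ← hQ.apply_eq_inv, ← hQ.apply_eq_inv, mul_comm]

theorem eq_mul_of_sorted (hQ : IsQuantumMatrix Q) {S : Finset (Fin m)}
    (hsorted : ∀ i ∈ S, ∀ j ∈ S, ∀ k ∈ S, i < j → j < k → Q i j * Q j k = Q i k)
    {a : Fin m} (ha : a ∈ S) (hmin : ∀ i ∈ S, a ≤ i) {i j : Fin m} (hi : i ∈ S)
    (hj : j ∈ S) :
    Q i j = Q i a * Q a j := by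
  wlog hij : i ≤ j generalizing i j
  · exact hQ.eq_mul_of_eq_mul_symm (this hj hi (le_of_not_ge hij))
  rcases hij.eq_or_lt with rfl | hij
  · rw [hQ.2.1, hQ.2.2]
  apply hQ.eq_mul_of_mul_eq
  rcases (hmin i hi).eq_or_lt with rfl | hai
  · rw [hQ.2.1, one_mul]
  · exact hsorted a ha i hi j hj hai hij

end IsQuantumMatrix

theorem stmt_3 {m : ℕ} (Q : Matrix (Fin m) (Fin m) ℂ) (hQ : IsQuantumMatrix Q)
    (S : Finset (Fin m)) (hS : S.Nonempty) :
    coordSubspace (↑S : Set (Fin m)) ⊆ pointCone Q ↔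
      (principalSubmatrix Q S).rank = 1 := by
  rw [coordSubspace_subset_pointCone_iff]
  constructor
  · intro hsorted
    let a := S.min' hS
    have ha : a ∈ S := S.min'_mem hS
    have hfactor : principalSubmatrix Q S =
        Matrix.vecMulVec (fun i : S => Q i a) (fun j : S => Q a j) := by
      ext i j
      exact hQ.eq_mul_of_sorted hsorted ha (fun i hi => S.min'_le i hi) i.2 j.2
    have hQa : Q a a ≠ 0 := by simp [hQ.2.1]
    rw [hfactor]
    exact Matrix.rank_vecMulVec_eq_one (i := ⟨a, ha⟩) (j := ⟨a, ha⟩) hQa hQa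
  · intro hrank i hi j hj k hk _ _
    simpa [principalSubmatrix, hQ.2.1] using
      Matrix.mul_eq_mul_of_rank_le_one hrank.le ⟨i, hi⟩ ⟨j, hj⟩ ⟨j, hj⟩ ⟨k, hk⟩
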